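/- arXiv:1011.3486 — 3 statements merged into one kernel-verified Lean document; each statement's English description precedes it below -/
import Mathlib

section
/- If u₁ is a positive C¹ eigenfunction of (ψ_p(u′))′ = −λ₁ψ_p(u) on [a,b] with u₁(a)=u₁(b)=0 normalized so that max u₁ = 1, then (p−1)|u₁′(x)|^p + λ₁|u₁(x)|^p = λ₁ for all x ∈ [a,b]. -/
open Real Set

noncomputable def psi (p t : ℝ) : ℝ := t * |t| ^ (p - 2)

/-!
Since `ψ_p(u₁′)` is differentiable and `ψ_q ∘ ψ_p = id` for the conjugate exponent `q`, the
energy `(p - 1)|u₁′|^p + λ₁|u₁|^p = (p - 1)|ψ_p(u₁′)|^q + λ₁|u₁|^p` is differentiable, and the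
equation makes its derivative vanish. So the energy is constant; at an interior maximum point of
`u₁` we have `u₁ = 1` and `u₁′ = 0`, where it equals `λ₁`.
-/

lemma abs_psi {p : ℝ} (hp : p ≠ 1) (t : ℝ) : |psi p t| = |t| ^ (p - 1) := by
  rcases eq_or_ne t 0 with rfl | ht
  · simp [psi, Real.zero_rpow (sub_ne_zero.2 hp)]
  · rw [psi, abs_mul, abs_of_nonneg (Real.rpow_nonneg (abs_nonneg t) _),
      ← Real.rpow_one_add' (abs_nonneg t) (by intro h; apply hp; linarith)]
    ring_nf

namespace Real.HolderConjugate

lemma abs_psi_rpow {p q : ℝ} (hpq : p.HolderConjugate q) (t : ℝ) : |psi p t| ^ q = |t| ^ p := by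
  rw [abs_psi hpq.lt.ne', ← Real.rpow_mul (abs_nonneg t), hpq.sub_one_mul_conj]

lemma psi_psi {p q : ℝ} (hpq : p.HolderConjugate q) (t : ℝ) : psi q (psi p t) = t := by
  rcases eq_or_ne t 0 with rfl | ht
  · simp [psi]
  · have hexp : (p - 1) * (q - 2) + (p - 2) = 0 := by linear_combination hpq.mul_eq_add
    rw [psi, abs_psi hpq.lt.ne', ← Real.rpow_mul (abs_nonneg t), psi, mul_assoc,
      ← Real.rpow_add (abs_pos.2 ht), add_comm, hexp, Real.rpow_zero, mul_one]

end Real.HolderConjugate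

lemma hasDerivAt_abs_rpow_eq_mul_psi {p : ℝ} (hp : 1 < p) (x : ℝ) :
    HasDerivAt (fun y => |y| ^ p) (p * psi p x) x := by
  convert hasDerivAt_abs_rpow x hp using 1
  rw [psi]; ring

/-- The first integral of `(ψ_p(u′))′ = -λ ψ_p(u)`, written through `ψ_p(u′)` since `u′` itself
need not be differentiable. -/
lemma hasDerivWithinAt_energy_eq_zero {p lam x : ℝ} {s : Set ℝ} (hp : 1 < p) {u u' : ℝ → ℝ}
    (hu : HasDerivWithinAt u (u' x) s x)
    (hpsi : HasDerivWithinAt (fun y => psi p (u' y)) (-(lam * psi p (u x))) s x) :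
    HasDerivWithinAt
      (fun y => (p - 1) * |psi p (u' y)| ^ p.conjExponent + lam * |u y| ^ p) 0 s x := by
  have hpq := Real.HolderConjugate.conjExponent hp
  have hkin := ((hasDerivAt_abs_rpow_eq_mul_psi hpq.symm.lt _).comp_hasDerivWithinAt x hpsi)
    |>.const_mul (p - 1)
  have hpot := ((hasDerivAt_abs_rpow_eq_mul_psi hp _).comp_hasDerivWithinAt x hu).const_mul lam
  rw [hpq.psi_psi] at hkin
  refine (hkin.add hpot).congr_deriv ?_
  linear_combination (-lam * u' x * psi p (u x)) * hpq.sub_one_mul_conj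

lemma energy_eq_of_eigen {p lam a b : ℝ} (hp : 1 < p) {u u' : ℝ → ℝ}
    (hderiv : ∀ x ∈ Icc a b, HasDerivWithinAt u (u' x) (Icc a b) x)
    (heq : ∀ x ∈ Icc a b,
      HasDerivWithinAt (fun y => psi p (u' y)) (-(lam * psi p (u x))) (Icc a b) x) :
    ∀ x ∈ Icc a b,
      (p - 1) * |u' x| ^ p + lam * |u x| ^ p = (p - 1) * |u' a| ^ p + lam * |u a| ^ p := by
  have hpq := Real.HolderConjugate.conjExponent hp
  have hE x (hx : x ∈ Icc a b) := hasDerivWithinAt_energy_eq_zero hp (hderiv x hx) (heq x hx)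
  intro x hx
  simpa only [hpq.abs_psi_rpow] using constant_of_has_deriv_right_zero
    (fun y hy => (hE y hy).continuousWithinAt)
    (fun y hy => (hE y (Ico_subset_Icc_self hy)).mono_of_mem_nhdsWithin
      (Icc_mem_nhdsGE_of_mem hy)) x hx

theorem energy_identity_general (p a b lam : ℝ) (hp : 1 < p)
    (u u' : ℝ → ℝ)
    (hderiv : ∀ x ∈ Icc a b, HasDerivWithinAt u (u' x) (Icc a b) x)
    (heq : ∀ x ∈ Icc a b,
      HasDerivWithinAt (fun y => psi p (u' y)) (-(lam * psi p (u x))) (Icc a b) x)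
    (ha : u a = 0) (hb : u b = 0)
    (hle : ∀ x ∈ Icc a b, u x ≤ 1)
    (hmax : ∃ x ∈ Icc a b, u x = 1) :
    ∀ x ∈ Icc a b, (p - 1) * |u' x| ^ p + lam * |u x| ^ p = lam := by
  obtain ⟨c, hc, hc1⟩ := hmax
  have hc_mem : Icc a b ∈ nhds c := by
    refine Icc_mem_nhds (hc.1.lt_of_ne ?_) (hc.2.lt_of_ne ?_) <;> rintro rfl <;> simp_all
  have hu'c : u' c = 0 :=
    IsLocalMax.hasDerivAt_eq_zero (Filter.mem_of_superset hc_mem fun y hy => hc1 ▸ hle y hy)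
      ((hderiv c hc).hasDerivAt hc_mem)
  intro x hx
  rw [energy_eq_of_eigen hp hderiv heq x hx, ← energy_eq_of_eigen hp hderiv heq c hc, hu'c, hc1]
  simp [Real.zero_rpow (by positivity : p ≠ 0)]

theorem energy_identity (p a b lam : ℝ) (hp : 1 < p) (hab : a < b)
    (u u' : ℝ → ℝ)
    (hu'c : ContinuousOn u' (Icc a b))
    (hderiv : ∀ x ∈ Icc a b, HasDerivWithinAt u (u' x) (Icc a b) x)
    (heq : ∀ x ∈ Icc a b,
      HasDerivWithinAt (fun y => psi p (u' y)) (-(lam * psi p (u x))) (Icc a b) x)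
    (ha : u a = 0) (hb : u b = 0)
    (hpos : ∀ x ∈ Ioo a b, 0 < u x)
    (hle : ∀ x ∈ Icc a b, u x ≤ 1)
    (hmax : ∃ x ∈ Icc a b, u x = 1) :
    ∀ x ∈ Icc a b, (p - 1) * |u' x| ^ p + lam * |u x| ^ p = lam :=
  energy_identity_general p a b lam hp u u' hderiv heq ha hb hle hmax
end

section
/- (Monotone quotient lemma) Let f, g : [a,b] → ℝ be continuous on [a,b], differentiable on (a,b), with g′(x) ≠ 0 for all x ∈ (a,b). If f′/g′ is strictly decreasing on (a,b), then x ↦ (f(x)−f(a))/(g(x)−g(a)) and x ↦ (f(x)−f(b))/(g(x)−g(b)) are strictly decreasing on (a,b). -/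
/-!
By Cauchy's mean value theorem the chord ratio `(f v - f u) / (g v - g u)` equals `f' / g'` at a
point of `(u, v)`, so for `u < v < w` the ratio over `[v, w]` is smaller than the one over `[u, v]`.
By Rolle's theorem `g` is injective, hence strictly monotone, so `g v - g u` and `g w - g v` have
the same sign and the ratio over `[u, w]` is a genuine mediant of the two: it lies strictly between
them. Fixing `u = a`, resp. `w = b`, gives the two claims.
-/

open Set

theorem mediant_mem_Ioo {α : Type*} [Field α] [LinearOrder α] [IsStrictOrderedRing α]
    {p q r s : α} (hqs : 0 < q * s) (h : r / s < p / q) :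
    (p + r) / (q + s) ∈ Ioo (r / s) (p / q) := by
  wlog hq : 0 < q generalizing p q r s
  · have hneg := this (p := -p) (q := -q) (r := -r) (s := -s) (by rwa [neg_mul_neg])
      (by rwa [neg_div_neg_eq, neg_div_neg_eq])
      (neg_pos.2 ((not_lt.1 hq).lt_of_ne fun h => by simp [h] at hqs))
    rwa [← neg_add, ← neg_add, neg_div_neg_eq, neg_div_neg_eq, neg_div_neg_eq] at hneg
  have hs : 0 < s := pos_of_mul_pos_right hqs hq.le
  rw [div_lt_div_iff₀ hs hq] at h
  constructor
  · rw [div_lt_div_iff₀ hs (by positivity)]; nlinarith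
  · rw [div_lt_div_iff₀ (by positivity) hq]; nlinarith

section CauchySlope

variable {a b : ℝ} {f g f' g' : ℝ → ℝ}

theorem injOn_Icc_of_hasDerivAt_ne_zero (hgc : ContinuousOn g (Icc a b))
    (hg : ∀ x ∈ Ioo a b, HasDerivAt g (g' x) x) (hg' : ∀ x ∈ Ioo a b, g' x ≠ 0) :
    InjOn g (Icc a b) := by
  intro u hu v hv huv
  by_contra hne
  wlog hlt : u < v generalizing u v
  · exact this hv hu huv.symm (Ne.symm hne) ((Ne.symm hne).lt_of_le (not_lt.1 hlt))
  obtain ⟨c, hc, hc0⟩ := exists_hasDerivAt_eq_zero hlt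
    (hgc.mono (Icc_subset_Icc hu.1 hv.2)) huv
    (fun x hx => hg x (Ioo_subset_Ioo hu.1 hv.2 hx))
  exact hg' c (Ioo_subset_Ioo hu.1 hv.2 hc) hc0

theorem exists_ratio_slope_eq_ratio_deriv (hfc : ContinuousOn f (Icc a b))
    (hgc : ContinuousOn g (Icc a b)) (hf : ∀ x ∈ Ioo a b, HasDerivAt f (f' x) x)
    (hg : ∀ x ∈ Ioo a b, HasDerivAt g (g' x) x) (hg' : ∀ x ∈ Ioo a b, g' x ≠ 0)
    {u v : ℝ} (hu : a ≤ u) (huv : u < v) (hv : v ≤ b) :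
    ∃ c ∈ Ioo u v, (f v - f u) / (g v - g u) = f' c / g' c := by
  have hsub : Ioo u v ⊆ Ioo a b := Ioo_subset_Ioo hu hv
  obtain ⟨c, hc, hcauchy⟩ := exists_ratio_hasDerivAt_eq_ratio_slope f f' huv
    (hfc.mono (Icc_subset_Icc hu hv)) (fun x hx => hf x (hsub hx))
    g g' (hgc.mono (Icc_subset_Icc hu hv)) (fun x hx => hg x (hsub hx))
  have hgv : g v - g u ≠ 0 := sub_ne_zero.2 fun h =>
    huv.ne' (injOn_Icc_of_hasDerivAt_ne_zero hgc hg hg' ⟨hu.trans huv.le, hv⟩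
      ⟨hu, huv.le.trans hv⟩ h)
  refine ⟨c, hc, ?_⟩
  rw [div_eq_div_iff hgv (hg' c (hsub hc))]
  linarith

theorem ratio_slope_mem_Ioo_of_strictAntiOn (hfc : ContinuousOn f (Icc a b))
    (hgc : ContinuousOn g (Icc a b)) (hf : ∀ x ∈ Ioo a b, HasDerivAt f (f' x) x)
    (hg : ∀ x ∈ Ioo a b, HasDerivAt g (g' x) x) (hg' : ∀ x ∈ Ioo a b, g' x ≠ 0)
    (hanti : StrictAntiOn (fun x => f' x / g' x) (Ioo a b))
    {u v w : ℝ} (hu : a ≤ u) (huv : u < v) (hvw : v < w) (hw : w ≤ b) :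
    (f w - f u) / (g w - g u) ∈ Ioo ((f w - f v) / (g w - g v)) ((f v - f u) / (g v - g u)) := by
  obtain ⟨c, hc, hcu⟩ :=
    exists_ratio_slope_eq_ratio_deriv hfc hgc hf hg hg' hu huv (hvw.le.trans hw)
  obtain ⟨d, hd, hdv⟩ :=
    exists_ratio_slope_eq_ratio_deriv hfc hgc hf hg hg' (hu.trans huv.le) hvw hw
  have hslope : (f w - f v) / (g w - g v) < (f v - f u) / (g v - g u) := by
    rw [hcu, hdv]
    exact hanti ⟨hu.trans_lt hc.1, hc.2.trans (hvw.trans_le hw)⟩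
      ⟨(hu.trans_lt huv).trans hd.1, hd.2.trans_le hw⟩ (hc.2.trans hd.1)
  have hmem : ∀ x, u ≤ x → x ≤ w → x ∈ Icc a b := fun x hux hxw =>
    ⟨hu.trans hux, hxw.trans hw⟩
  have hsign : 0 < (g v - g u) * (g w - g v) := by
    have hmemu := hmem u le_rfl (huv.trans hvw).le
    have hmemv := hmem v huv.le hvw.le
    have hmemw := hmem w (huv.trans hvw).le le_rfl
    rcases hgc.strictMonoOn_of_injOn_Icc' (hu.trans ((huv.trans hvw).le.trans hw))
      (injOn_Icc_of_hasDerivAt_ne_zero hgc hg hg') with hinc | hdec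
    · exact mul_pos (sub_pos.2 (hinc hmemu hmemv huv)) (sub_pos.2 (hinc hmemv hmemw hvw))
    · exact mul_pos_of_neg_of_neg (sub_neg.2 (hdec hmemu hmemv huv))
        (sub_neg.2 (hdec hmemv hmemw hvw))
  have := mediant_mem_Ioo hsign hslope
  rwa [sub_add_sub_cancel', sub_add_sub_cancel'] at this

end CauchySlope

theorem monotone_quotient_lemma_general (a b : ℝ) (f g f' g' : ℝ → ℝ)
    (hfc : ContinuousOn f (Icc a b)) (hgc : ContinuousOn g (Icc a b))
    (hf : ∀ x ∈ Ioo a b, HasDerivAt f (f' x) x)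
    (hg : ∀ x ∈ Ioo a b, HasDerivAt g (g' x) x)
    (hg' : ∀ x ∈ Ioo a b, g' x ≠ 0)
    (hanti : StrictAntiOn (fun x => f' x / g' x) (Ioo a b)) :
    StrictAntiOn (fun x => (f x - f a) / (g x - g a)) (Ioo a b) ∧
    StrictAntiOn (fun x => (f x - f b) / (g x - g b)) (Ioo a b) := by
  have hcomm : ∀ x, (f x - f b) / (g x - g b) = (f b - f x) / (g b - g x) := fun x => by
    rw [← neg_sub (f b), ← neg_sub (g b), neg_div_neg_eq]
  constructor
  · intro x hx y hy hxy
    exact (ratio_slope_mem_Ioo_of_strictAntiOn hfc hgc hf hg hg' hanti le_rfl hx.1 hxy hy.2.le).2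
  · intro x hx y hy hxy
    simp only [hcomm]
    exact (ratio_slope_mem_Ioo_of_strictAntiOn hfc hgc hf hg hg' hanti hx.1.le hxy hy.2 le_rfl).1

theorem monotone_quotient_lemma (a b : ℝ) (hab : a < b) (f g f' g' : ℝ → ℝ)
    (hfc : ContinuousOn f (Icc a b)) (hgc : ContinuousOn g (Icc a b))
    (hf : ∀ x ∈ Ioo a b, HasDerivAt f (f' x) x)
    (hg : ∀ x ∈ Ioo a b, HasDerivAt g (g' x) x)
    (hg' : ∀ x ∈ Ioo a b, g' x ≠ 0)
    (hanti : StrictAntiOn (fun x => f' x / g' x) (Ioo a b)) :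
    StrictAntiOn (fun x => (f x - f a) / (g x - g a)) (Ioo a b) ∧
    StrictAntiOn (fun x => (f x - f b) / (g x - g b)) (Ioo a b) :=
  monotone_quotient_lemma_general a b f g f' g' hfc hgc hf hg hg' hanti
end

section
/- For each n ≥ 1, the quotient φ_n/φ_{n+1} is strictly decreasing on (0, π_p/2], and its infimum over I_p equals φ_n(π_p/2)/φ_{n+1}(π_p/2) = ‖φ_n‖_∞/‖φ_{n+1}‖_∞, which is at least 1/‖φ₁‖_∞. -/
/-!
Write `f ≼ g` when `f / g` is decreasing. The monotone form of l'Hôpital's rule says that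
`f ≼ g` on `[a, b]` implies `∫ₐˣ f ≼ ∫ₐˣ g` and `∫ₓᵇ f ≼ ∫ₓᵇ g`, and `ψ_q` (`q > 1`) preserves
`≼` because it is multiplicative and increasing on `[0, ∞)`. The map `φₙ ↦ φₙ₊₁` is a composite
of these four operations, so `φₙ ≼ φₙ₊₁` follows by induction from `φ₀ = 1 ≼ φ₁`, i.e. from
`φ₁` being increasing; strictness propagates the same way. Hence the infimum of `φₙ / φₙ₊₁` is
attained at `π_p / 2`, where the increasing `φₙ` attains its supremum. Finally
`ψ_p(φₙ) ≤ ψ_p(φₙ(π_p/2)) · ψ_p(φ₀)` integrates through the recursion to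
`φₙ₊₁(π_p/2) ≤ φₙ(π_p/2) · φ₁(π_p/2)`.
-/

open Real Set

noncomputable def piP (p : ℝ) : ℝ := 2 * (p - 1) ^ (1/p) * ((π / p) / Real.sin (π / p))

noncomputable def phi (p : ℝ) : ℕ → ℝ → ℝ
  | 0 => fun _ => 1
  | n + 1 => fun x => ∫ θ in (0:ℝ)..x,
      psi (p / (p - 1)) (∫ s in θ..(piP p / 2), psi p (phi p n s))

open MeasureTheory intervalIntegral

section Psi

variable {q : ℝ}

theorem psi_of_nonneg {t : ℝ} (hq : q ≠ 1) (ht : 0 ≤ t) : psi q t = t ^ (q - 1) := by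
  rcases ht.eq_or_lt with rfl | ht
  · simp [psi, Real.zero_rpow (sub_ne_zero.2 hq)]
  · rw [psi, abs_of_pos ht, show q - 1 = 1 + (q - 2) by ring, Real.rpow_add ht, Real.rpow_one]

theorem psi_nonneg {t : ℝ} (ht : 0 ≤ t) : 0 ≤ psi q t :=
  mul_nonneg ht (Real.rpow_nonneg (abs_nonneg t) _)

theorem psi_pos {t : ℝ} (ht : 0 < t) : 0 < psi q t :=
  mul_pos ht (Real.rpow_pos_of_pos (abs_pos.2 ht.ne') _)

theorem psi_one : psi q 1 = 1 := by
  simp [psi]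

theorem psi_mul (x y : ℝ) : psi q (x * y) = psi q x * psi q y := by
  simp only [psi, abs_mul, Real.mul_rpow (abs_nonneg x) (abs_nonneg y)]
  ring

theorem strictMonoOn_psi (hq : 1 < q) : StrictMonoOn (psi q) (Ici 0) := by
  intro x hx y hy hxy
  rw [psi_of_nonneg hq.ne' hx, psi_of_nonneg hq.ne' hy]
  exact Real.rpow_lt_rpow hx hxy (by linarith)

theorem continuousOn_psi (hq : 1 < q) : ContinuousOn (psi q) (Ici 0) :=
  (continuousOn_id.rpow_const fun _ _ => Or.inr (by linarith)).congr
    fun _ ht => psi_of_nonneg hq.ne' ht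

theorem one_lt_div_sub_one {p : ℝ} (hp : 1 < p) : 1 < p / (p - 1) := by
  rw [lt_div_iff₀ (by linarith)]
  linarith

theorem psi_div_sub_one_psi {p t : ℝ} (hp : 1 < p) (ht : 0 ≤ t) :
    psi (p / (p - 1)) (psi p t) = t := by
  have hexp : (p - 1) * (p / (p - 1) - 1) = 1 := by
    rw [mul_sub, mul_div_cancel₀ _ (by linarith)]
    ring
  rw [psi_of_nonneg hp.ne' ht, psi_of_nonneg (one_lt_div_sub_one hp).ne' (Real.rpow_nonneg ht _),
    ← Real.rpow_mul ht, hexp, Real.rpow_one]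

end Psi

/-- `f / g` is antitone on `s`, cross-multiplied so that zeros of `g` are harmless. -/
def RatioAntiOn (f g : ℝ → ℝ) (s : Set ℝ) : Prop :=
  ∀ ⦃x⦄, x ∈ s → ∀ ⦃y⦄, y ∈ s → x ≤ y → f y * g x ≤ f x * g y

def RatioStrictAntiOn (f g : ℝ → ℝ) (s : Set ℝ) : Prop :=
  ∀ ⦃x⦄, x ∈ s → ∀ ⦃y⦄, y ∈ s → x < y → f y * g x < f x * g y

section Ratio

variable {f g : ℝ → ℝ} {s t : Set ℝ}

theorem RatioStrictAntiOn.mono (h : RatioStrictAntiOn f g s) (hts : t ⊆ s) :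
    RatioStrictAntiOn f g t :=
  fun _ hx _ hy hxy => h (hts hx) (hts hy) hxy

theorem RatioStrictAntiOn.ratioAntiOn_insert {c : ℝ} (h : RatioStrictAntiOn f g s)
    (hf : f c = 0) (hg : g c = 0) : RatioAntiOn f g (insert c s) := by
  rintro x (rfl | hx) y (rfl | hy) hxy
  · exact le_rfl
  · simp [hf, hg]
  · simp [hf, hg]
  · rcases hxy.eq_or_lt with rfl | hlt
    · exact le_rfl
    · exact (h hx hy hlt).le

theorem RatioStrictAntiOn.strictAntiOn_div (h : RatioStrictAntiOn f g s)
    (hg : ∀ x ∈ s, 0 < g x) : StrictAntiOn (fun x => f x / g x) s :=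
  fun x hx y hy hxy => (div_lt_div_iff₀ (hg y hy) (hg x hx)).2 (h hx hy hxy)

variable {q : ℝ}

theorem RatioAntiOn.psi (hq : 1 < q) (hf : ∀ x ∈ s, 0 ≤ f x) (hg : ∀ x ∈ s, 0 ≤ g x)
    (h : RatioAntiOn f g s) :
    RatioAntiOn (fun x => psi q (f x)) (fun x => psi q (g x)) s := by
  intro x hx y hy hxy
  simp only [← psi_mul]
  exact (strictMonoOn_psi hq).monotoneOn (mul_nonneg (hf y hy) (hg x hx))
    (mul_nonneg (hf x hx) (hg y hy)) (h hx hy hxy)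

theorem RatioStrictAntiOn.psi (hq : 1 < q) (hf : ∀ x ∈ s, 0 ≤ f x) (hg : ∀ x ∈ s, 0 ≤ g x)
    (h : RatioStrictAntiOn f g s) :
    RatioStrictAntiOn (fun x => psi q (f x)) (fun x => psi q (g x)) s := by
  intro x hx y hy hxy
  simp only [← psi_mul]
  exact strictMonoOn_psi hq (mul_nonneg (hf y hy) (hg x hx))
    (mul_nonneg (hf x hx) (hg y hy)) (h hx hy hxy)

end Ratio

structure IsWeightOn (f : ℝ → ℝ) (a b : ℝ) : Prop where
  continuousOn : ContinuousOn f (Icc a b)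
  nonneg : ∀ x ∈ Icc a b, 0 ≤ f x
  pos : ∀ x ∈ Ioo a b, 0 < f x

namespace IsWeightOn

variable {f : ℝ → ℝ} {a b : ℝ}

theorem psi {q : ℝ} (hq : 1 < q) (hf : IsWeightOn f a b) :
    IsWeightOn (fun x => psi q (f x)) a b where
  continuousOn := (continuousOn_psi hq).comp hf.continuousOn hf.nonneg
  nonneg x hx := psi_nonneg (hf.nonneg x hx)
  pos x hx := psi_pos (hf.pos x hx)

theorem intervalIntegrable (hf : IsWeightOn f a b) {x y : ℝ} (hx : x ∈ Icc a b)
    (hy : y ∈ Icc a b) : IntervalIntegrable f volume x y :=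
  (hf.continuousOn.mono (uIcc_subset_Icc hx hy)).intervalIntegrable

theorem integral_pos (hf : IsWeightOn f a b) {x y : ℝ} (hx : x ∈ Icc a b) (hy : y ∈ Icc a b)
    (hxy : x < y) : 0 < ∫ t in x..y, f t :=
  intervalIntegral_pos_of_pos_on (hf.intervalIntegrable hx hy)
    (fun _ ht => hf.pos _ ⟨hx.1.trans_lt ht.1, ht.2.trans_le hy.2⟩) hxy

theorem strictMonoOn_primitive (hf : IsWeightOn f a b) :
    StrictMonoOn (fun x => ∫ t in a..x, f t) (Icc a b) := by
  intro x hx y hy hxy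
  dsimp only
  have ha : a ∈ Icc a b := ⟨le_rfl, hx.1.trans hx.2⟩
  rw [← integral_add_adjacent_intervals (hf.intervalIntegrable ha hx)
    (hf.intervalIntegrable hx hy)]
  linarith [hf.integral_pos hx hy hxy]

theorem strictAntiOn_tail (hf : IsWeightOn f a b) :
    StrictAntiOn (fun x => ∫ t in x..b, f t) (Icc a b) := by
  intro x hx y hy hxy
  dsimp only
  have hb : b ∈ Icc a b := ⟨hx.1.trans hx.2, le_rfl⟩
  rw [← integral_add_adjacent_intervals (hf.intervalIntegrable hx hy)
    (hf.intervalIntegrable hy hb)]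
  linarith [hf.integral_pos hx hy hxy]

theorem primitive (hab : a ≤ b) (hf : IsWeightOn f a b) :
    IsWeightOn (fun x => ∫ t in a..x, f t) a b where
  continuousOn := by
    simpa only [uIcc_of_le hab] using
      continuousOn_primitive_interval (hf.continuousOn.integrableOn_Icc.mono_set
        (uIcc_of_le hab).subset)
  nonneg x hx := integral_nonneg hx.1 fun t ht => hf.nonneg t ⟨ht.1, ht.2.trans hx.2⟩
  pos x hx := hf.integral_pos (left_mem_Icc.2 hab) (Ioo_subset_Icc_self hx) hx.1

theorem tail (hab : a ≤ b) (hf : IsWeightOn f a b) :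
    IsWeightOn (fun x => ∫ t in x..b, f t) a b where
  continuousOn := by
    simpa only [uIcc_of_le hab] using
      continuousOn_primitive_interval_left (hf.continuousOn.integrableOn_Icc.mono_set
        (uIcc_of_le hab).subset)
  nonneg x hx := integral_nonneg hx.2 fun t ht => hf.nonneg t ⟨hx.1.trans ht.1, ht.2⟩
  pos x hx := hf.integral_pos (Ioo_subset_Icc_self hx) (right_mem_Icc.2 hab) hx.2

end IsWeightOn

section RatioOfIntegrals

variable {f g : ℝ → ℝ} {a b : ℝ}

/-- Cross-multiplied form of `P / Q ≤ m / k < R / S → P / Q < R / S`. -/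
theorem mul_lt_mul_of_ratio_le_of_lt {P Q R S k m : ℝ} (h₁ : P * k ≤ m * Q) (h₂ : S * m < k * R)
    (hS : 0 ≤ S) (hQ : 0 < Q) (hk : 0 < k) : P * S < R * Q := by
  nlinarith [mul_le_mul_of_nonneg_right h₁ hS, mul_lt_mul_of_pos_right h₂ hQ]

theorem integral_mul_le_mul_integral {k m : ℝ} (hab : a ≤ b) (hf : ContinuousOn f (Icc a b))
    (hg : ContinuousOn g (Icc a b)) (h : ∀ t ∈ Icc a b, f t * k ≤ m * g t) :
    (∫ t in a..b, f t) * k ≤ m * ∫ t in a..b, g t := by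
  rw [← intervalIntegral.integral_mul_const, ← intervalIntegral.integral_const_mul]
  exact integral_mono_on hab ((hf.mul continuousOn_const).intervalIntegrable_of_Icc hab)
    ((continuousOn_const.mul hg).intervalIntegrable_of_Icc hab) h

theorem integral_mul_lt_mul_integral {k m : ℝ} (hab : a < b) (hf : ContinuousOn f (Icc a b))
    (hg : ContinuousOn g (Icc a b)) (h : ∀ t ∈ Icc a b, f t * k ≤ m * g t)
    (hlt : ∃ t ∈ Icc a b, f t * k < m * g t) :
    (∫ t in a..b, f t) * k < m * ∫ t in a..b, g t := by
  rw [← intervalIntegral.integral_mul_const, ← intervalIntegral.integral_const_mul]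
  exact integral_lt_integral_of_continuousOn_of_le_of_exists_lt hab
    (hf.mul continuousOn_const) (continuousOn_const.mul hg)
    (fun t ht => h t (Ioc_subset_Icc_self ht)) hlt

theorem ratioStrictAntiOn_primitive (hf : ContinuousOn f (Icc a b)) (hg : IsWeightOn g a b)
    (hanti : RatioAntiOn f g (Icc a b)) (hstrict : RatioStrictAntiOn f g (Ioo a b)) :
    RatioStrictAntiOn (fun x => ∫ t in a..x, f t) (fun x => ∫ t in a..x, g t) (Ioc a b) := by
  intro x hx y hy hxy
  dsimp only
  have hxb : x < b := hxy.trans_le hy.2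
  have hxI : x ∈ Icc a b := ⟨hx.1.le, hxb.le⟩
  have haI : a ∈ Icc a b := ⟨le_rfl, hxI.2.trans' hxI.1⟩
  have hxIoo : x ∈ Ioo a b := ⟨hx.1, hxb⟩
  have hax : Icc a x ⊆ Icc a b := Icc_subset_Icc_right hxb.le
  have hxy' : Icc x y ⊆ Icc a b := Icc_subset_Icc hx.1.le hy.2
  -- The mean ratio over `[a, x]` exceeds `f x / g x`, which bounds the one over `[x, y]`;
  -- the ratio over `[a, y]` is their mediant.
  have h_left : (∫ t in a..x, g t) * f x < g x * ∫ t in a..x, f t :=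
    integral_mul_lt_mul_integral hx.1 (hg.continuousOn.mono hax) (hf.mono hax)
      (fun s hs => by linarith [hanti (hax hs) hxI hs.2])
      ⟨(a + x) / 2, ⟨by linarith [hx.1], by linarith [hx.1]⟩, by
        linarith [hstrict (x := (a + x) / 2) ⟨by linarith [hx.1], by linarith [hx.1]⟩ hxIoo
          (by linarith [hx.1])]⟩
  have h_right : (∫ t in x..y, f t) * g x ≤ f x * ∫ t in x..y, g t :=
    integral_mul_le_mul_integral hxy.le (hf.mono hxy') (hg.continuousOn.mono hxy')
      fun t ht => hanti hxI (hxy' ht) ht.1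
  have key := mul_lt_mul_of_ratio_le_of_lt h_right h_left
    (integral_nonneg hx.1.le fun t ht => hg.nonneg t (hax ht))
    (hg.integral_pos hxI (Ioc_subset_Icc_self hy) hxy) (hg.pos x hxIoo)
  rw [← integral_add_adjacent_intervals ((hf.mono hax).intervalIntegrable_of_Icc hx.1.le)
      ((hf.mono hxy').intervalIntegrable_of_Icc hxy.le),
    ← integral_add_adjacent_intervals (hg.intervalIntegrable haI hxI)
      (hg.intervalIntegrable hxI (Ioc_subset_Icc_self hy))]
  linarith

theorem ratioStrictAntiOn_tail (hf : ContinuousOn f (Icc a b)) (hg : IsWeightOn g a b)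
    (hanti : RatioAntiOn f g (Icc a b)) (hstrict : RatioStrictAntiOn f g (Ioo a b)) :
    RatioStrictAntiOn (fun x => ∫ t in x..b, f t) (fun x => ∫ t in x..b, g t) (Ico a b) := by
  intro x hx y hy hxy
  dsimp only
  have hay : a < y := hx.1.trans_lt hxy
  have hyI : y ∈ Icc a b := ⟨hay.le, hy.2.le⟩
  have hbI : b ∈ Icc a b := ⟨hyI.1.trans hyI.2, le_rfl⟩
  have hyb : Icc y b ⊆ Icc a b := Icc_subset_Icc_left hay.le
  have hxy' : Icc x y ⊆ Icc a b := Icc_subset_Icc hx.1 hy.2.le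
  have h_left : (∫ t in x..y, g t) * f y < g y * ∫ t in x..y, f t :=
    integral_mul_lt_mul_integral hxy (hg.continuousOn.mono hxy') (hf.mono hxy')
      (fun s hs => by linarith [hanti (hxy' hs) hyI hs.2])
      ⟨(x + y) / 2, ⟨by linarith, by linarith⟩, by
        linarith [hstrict (x := (x + y) / 2) ⟨by linarith [hx.1], by linarith [hy.2]⟩
          ⟨hay, hy.2⟩ (by linarith)]⟩
  have h_right : (∫ t in y..b, f t) * g y ≤ f y * ∫ t in y..b, g t :=
    integral_mul_le_mul_integral hy.2.le (hf.mono hyb) (hg.continuousOn.mono hyb)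
      fun t ht => hanti hyI (hyb ht) ht.1
  have key := mul_lt_mul_of_ratio_le_of_lt h_right h_left
    (integral_nonneg hxy.le fun t ht => hg.nonneg t (hxy' ht))
    (hg.integral_pos hyI hbI hy.2) (hg.pos y ⟨hay, hy.2⟩)
  rw [← integral_add_adjacent_intervals ((hf.mono hxy').intervalIntegrable_of_Icc hxy.le)
      ((hf.mono hyb).intervalIntegrable_of_Icc hy.2.le),
    ← integral_add_adjacent_intervals (hg.intervalIntegrable (hxy' (left_mem_Icc.2 hxy.le)) hyI)
      (hg.intervalIntegrable hyI hbI)]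
  linarith

end RatioOfIntegrals

section Phi

variable {p : ℝ}

theorem piP_pos (hp : 1 < p) : 0 < piP p := by
  have hπp : π / p < π := div_lt_self pi_pos hp
  have hsin : 0 < Real.sin (π / p) := Real.sin_pos_of_pos_of_lt_pi (by positivity) hπp
  have : 0 < (p - 1) ^ (1 / p) := Real.rpow_pos_of_pos (by linarith) _
  unfold piP
  positivity

theorem isWeightOn_phi (hp : 1 < p) (n : ℕ) : IsWeightOn (phi p n) 0 (piP p / 2) := by
  have hb : 0 ≤ piP p / 2 := (half_pos (piP_pos hp)).le
  induction n with
  | zero => exact ⟨continuousOn_const, fun _ _ => zero_le_one, fun _ _ => one_pos⟩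
  | succ n ih => exact (((ih.psi hp).tail hb).psi (one_lt_div_sub_one hp)).primitive hb

theorem strictMonoOn_phi_succ (hp : 1 < p) (n : ℕ) :
    StrictMonoOn (phi p (n + 1)) (Icc 0 (piP p / 2)) :=
  ((((isWeightOn_phi hp n).psi hp).tail (half_pos (piP_pos hp)).le).psi
    (one_lt_div_sub_one hp)).strictMonoOn_primitive

theorem monotoneOn_phi (hp : 1 < p) : ∀ n, MonotoneOn (phi p n) (Icc 0 (piP p / 2))
  | 0 => monotoneOn_const
  | n + 1 => (strictMonoOn_phi_succ hp n).monotoneOn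

theorem phi_succ_pos (hp : 1 < p) (n : ℕ) {x : ℝ} (hx : x ∈ Ioc 0 (piP p / 2)) :
    0 < phi p (n + 1) x :=
  (integral_same (a := 0)).symm.trans_lt <|
    strictMonoOn_phi_succ hp n ⟨le_rfl, hx.1.le.trans hx.2⟩ (Ioc_subset_Icc_self hx) hx.1

theorem ratioAntiOn_phi (hp : 1 < p) (n : ℕ) :
    RatioAntiOn (phi p n) (phi p (n + 1)) (Icc 0 (piP p / 2)) ∧
      RatioStrictAntiOn (phi p n) (phi p (n + 1)) (Ioc 0 (piP p / 2)) := by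
  have hb : 0 ≤ piP p / 2 := (half_pos (piP_pos hp)).le
  have hp' := one_lt_div_sub_one hp
  induction n with
  | zero =>
    refine ⟨fun x hx y hy hxy => ?_, fun x hx y hy hxy => ?_⟩
    · simpa [phi] using monotoneOn_phi hp 1 hx hy hxy
    · simpa [phi] using strictMonoOn_phi_succ hp 0 (Ioc_subset_Icc_self hx)
        (Ioc_subset_Icc_self hy) hxy
  | succ n ih =>
    have hw := isWeightOn_phi hp n
    have hw₁ := isWeightOn_phi hp (n + 1)
    have hψ := ih.1.psi hp hw.nonneg hw₁.nonneg
    have hψs := (ih.2.mono Ioo_subset_Ioc_self).psi hp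
      (fun x hx => (hw.pos x hx).le) (fun x hx => (hw₁.pos x hx).le)
    have hT := (hw.psi hp).tail hb
    have hT₁ := (hw₁.psi hp).tail hb
    have htail := ratioStrictAntiOn_tail (hw.psi hp).continuousOn (hw₁.psi hp) hψ hψs
    have htail' := htail.ratioAntiOn_insert integral_same integral_same
    rw [Ico_insert_right hb] at htail'
    have hprim := ratioStrictAntiOn_primitive (hT.psi hp').continuousOn (hT₁.psi hp')
      (htail'.psi hp' hT.nonneg hT₁.nonneg)
      ((htail.mono Ioo_subset_Ico_self).psi hp'
        (fun x hx => (hT.pos x hx).le) (fun x hx => (hT₁.pos x hx).le))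
    have hprim' := hprim.ratioAntiOn_insert integral_same integral_same
    rw [Ioc_insert_left hb] at hprim'
    exact ⟨hprim', hprim⟩

theorem sSup_abs_phi (hp : 1 < p) (n : ℕ) :
    sSup ((fun x => |phi p n x|) '' Icc 0 (piP p / 2)) = phi p n (piP p / 2) := by
  have hw := isWeightOn_phi hp n
  have hmono : MonotoneOn (fun x => |phi p n x|) (Icc 0 (piP p / 2)) := by
    intro x hx y hy hxy
    simp only [abs_of_nonneg (hw.nonneg x hx), abs_of_nonneg (hw.nonneg y hy)]
    exact monotoneOn_phi hp n hx hy hxy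
  have hb := right_mem_Icc.2 (half_pos (piP_pos hp)).le
  rw [(hmono.map_isGreatest (isGreatest_Icc hb.1)).csSup_eq, abs_of_nonneg (hw.nonneg _ hb)]

theorem phi_succ_le_mul_phi_one (hp : 1 < p) (n : ℕ) :
    phi p (n + 1) (piP p / 2) ≤ phi p n (piP p / 2) * phi p 1 (piP p / 2) := by
  set b := piP p / 2
  set c := phi p n b
  have hp' := one_lt_div_sub_one hp
  have hb : 0 ≤ b := (half_pos (piP_pos hp)).le
  have hbI : b ∈ Icc 0 b := right_mem_Icc.2 hb
  have hw := isWeightOn_phi hp n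
  have hc : 0 ≤ c := hw.nonneg b hbI
  have hT := (hw.psi hp).tail hb
  have hT₀ := ((isWeightOn_phi hp 0).psi hp).tail hb
  have htail : ∀ θ ∈ Icc 0 b, (∫ s in θ..b, psi p (phi p n s)) ≤
      psi p c * ∫ s in θ..b, psi p (phi p 0 s) := by
    intro θ hθ
    rw [← intervalIntegral.integral_const_mul]
    refine integral_mono_on hθ.2 ((hw.psi hp).intervalIntegrable hθ hbI)
      ((((isWeightOn_phi hp 0).psi hp).intervalIntegrable hθ hbI).const_mul _) fun s hs => ?_
    have hsI : s ∈ Icc 0 b := ⟨hθ.1.trans hs.1, hs.2⟩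
    rw [show phi p 0 s = 1 from rfl, psi_one, mul_one]
    exact (strictMonoOn_psi hp).monotoneOn (hw.nonneg s hsI) hc
      (monotoneOn_phi hp n hsI hbI hs.2)
  calc phi p (n + 1) b = ∫ θ in 0..b, psi (p / (p - 1)) (∫ s in θ..b, psi p (phi p n s)) := rfl
    _ ≤ ∫ θ in 0..b, c * psi (p / (p - 1)) (∫ s in θ..b, psi p (phi p 0 s)) := by
      refine integral_mono_on hb ((hT.psi hp').intervalIntegrable (left_mem_Icc.2 hb) hbI)
        (((hT₀.psi hp').intervalIntegrable (left_mem_Icc.2 hb) hbI).const_mul c)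
        fun θ hθ => ?_
      calc psi (p / (p - 1)) (∫ s in θ..b, psi p (phi p n s))
          ≤ psi (p / (p - 1)) (psi p c * ∫ s in θ..b, psi p (phi p 0 s)) :=
            (strictMonoOn_psi hp').monotoneOn (hT.nonneg θ hθ)
              (mul_nonneg (psi_nonneg hc) (hT₀.nonneg θ hθ)) (htail θ hθ)
        _ = c * psi (p / (p - 1)) (∫ s in θ..b, psi p (phi p 0 s)) := by
          rw [psi_mul, psi_div_sub_one_psi hp hc]
    _ = c * phi p 1 b := intervalIntegral.integral_const_mul _ _

end Phi

theorem phi_quotient_strictAnti_inf (p : ℝ) (hp : 1 < p) :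
    ∀ n : ℕ, 1 ≤ n →
      StrictAntiOn (fun x => phi p n x / phi p (n + 1) x) (Ioc 0 (piP p / 2)) ∧
      sInf ((fun x => phi p n x / phi p (n + 1) x) '' Ioc 0 (piP p / 2)) =
        phi p n (piP p / 2) / phi p (n + 1) (piP p / 2) ∧
      phi p n (piP p / 2) / phi p (n + 1) (piP p / 2) =
        sSup ((fun x => |phi p n x|) '' Icc 0 (piP p / 2)) /
          sSup ((fun x => |phi p (n + 1) x|) '' Icc 0 (piP p / 2)) ∧
      1 / sSup ((fun x => |phi p 1 x|) '' Icc 0 (piP p / 2)) ≤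
        phi p n (piP p / 2) / phi p (n + 1) (piP p / 2) := by
  intro n _
  have hb := half_pos (piP_pos hp)
  have hbI : piP p / 2 ∈ Ioc 0 (piP p / 2) := right_mem_Ioc.2 hb
  have hanti := (ratioAntiOn_phi hp n).2.strictAntiOn_div fun x hx => phi_succ_pos hp n hx
  refine ⟨hanti, (hanti.antitoneOn.map_isGreatest (isGreatest_Ioc hb)).csInf_eq, ?_, ?_⟩
  · rw [sSup_abs_phi hp n, sSup_abs_phi hp (n + 1)]
  · rw [sSup_abs_phi hp 1, div_le_div_iff₀ (phi_succ_pos hp 0 hbI) (phi_succ_pos hp n hbI),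
      one_mul]
    exact phi_succ_le_mul_phi_one hp n
end
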